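/- The one-player game with actions {0,1} and payoff u(r) = 0 if r is constantly 1, and u(r) = (1−δ)·Σ_{n≤0} δ^{−n} r(n) otherwise (with 0 < δ < 1), admits no equilibrium: for every run r there exists a stage n and a run r' agreeing with r on stages < n such that u(r') > u(r). -/

import Mathlib

/-- Stages: non-positive integers. -/
abbrev Stage : Type := {n : ℤ // n ≤ 0}

/-- A run assigns an action to each stage. -/
abbrev Run (A : Type) : Type := Stage → A

/-- A position at stage `n` records the actions at all stages `k < n`. -/
abbrev Position (A : Type) (n : ℤ) : Type := {k : ℤ // k < n} → A

/-- The space of all positions. -/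
abbrev Pos (A : Type) : Type := Σ n : Stage, Position A n.1

/-- The position induced by a run `r` at stage `n`. -/
def restrictRun {A : Type} (r : Run A) (n : Stage) : Position A n.1 :=
  fun k => r ⟨k.1, le_trans k.2.le n.2⟩

/- The payoff: `0` if the run is constantly `1`, and otherwise the reversed-time discounted
sum `(1 - δ) * ∑ δ^(-n) r(n)`. -/
open Classical in
noncomputable def discPayoff (δ : ℝ) (r : Run (Fin 2)) : ℝ :=
  if ∀ n : Stage, r n = 1 then 0
  else (1 - δ) * ∑' n : Stage, δ ^ (-n.1).toNat * ((r n).val : ℝ)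

/-!
If `r` is constantly `1`, its payoff is `0`, while any run containing both a `0` and a `1` has
positive payoff. Otherwise `r` plays `0` at some stage `m`; deviate at `m - 1` by playing `0`
there and `1` from `m` on. This gains weight `δ^(-m)` at stage `m`, loses at most `δ^(-m+1)`
at stage `m - 1` and nothing elsewhere, and it keeps a `0` in the run, so the payoff is still
the discounted sum and strictly increases.
-/

theorem tsum_pos_of_add_pos_of_nonneg {ι α : Type*} [AddCommGroup α] [PartialOrder α]
    [IsOrderedAddMonoid α] [TopologicalSpace α] [IsTopologicalAddGroup α]
    [OrderClosedTopology α]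
    {d : ι → α} (hd : Summable d) {i j : ι} (hij : i ≠ j) (hpos : 0 < d i + d j)
    (hnonneg : ∀ k, k ≠ i → k ≠ j → 0 ≤ d k) : 0 < ∑' k, d k := by
  classical
  rw [← hd.sum_add_tsum_compl (s := {i, j}), Finset.sum_pair hij]
  exact add_pos_of_pos_of_nonneg hpos
    (tsum_nonneg fun k => hnonneg k (fun h => k.2 (by simp [h])) (fun h => k.2 (by simp [h])))

noncomputable def discSum (δ : ℝ) (r : Run (Fin 2)) : ℝ :=
  ∑' n : Stage, δ ^ (-n.1).toNat * ((r n).val : ℝ)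

theorem discPayoff_of_forall_eq_one {δ : ℝ} {r : Run (Fin 2)} (h : ∀ n, r n = 1) :
    discPayoff δ r = 0 :=
  if_pos h

theorem discPayoff_of_ne_one {δ : ℝ} {r : Run (Fin 2)} {m : Stage} (h : r m ≠ 1) :
    discPayoff δ r = (1 - δ) * discSum δ r :=
  if_neg fun hall => h (hall m)

theorem summable_pow_toNat_neg {δ : ℝ} (h0 : 0 ≤ δ) (h1 : δ < 1) :
    Summable fun n : Stage => δ ^ (-n.1).toNat :=
  (summable_geometric_of_lt_one h0 h1).comp_injective fun a b h =>
    Subtype.ext (by have := a.2; have := b.2; omega)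

theorem summable_discSum {δ : ℝ} (h0 : 0 ≤ δ) (h1 : δ < 1) (r : Run (Fin 2)) :
    Summable fun n : Stage => δ ^ (-n.1).toNat * ((r n).val : ℝ) :=
  (summable_pow_toNat_neg h0 h1).of_nonneg_of_le (fun _ => by positivity) fun n =>
    mul_le_of_le_one_right (by positivity) (by exact_mod_cast Fin.is_le (r n))

def switchRun (r : Run (Fin 2)) (n : Stage) : Run (Fin 2) :=
  fun k => if k.1 < n.1 then r k else if k = n then 0 else 1

section switchRun

variable {r : Run (Fin 2)} {n k : Stage}

theorem switchRun_of_lt (hk : k.1 < n.1) : switchRun r n k = r k :=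
  if_pos hk

theorem switchRun_self : switchRun r n n = 0 := by
  simp [switchRun]

theorem switchRun_of_gt (hk : n.1 < k.1) : switchRun r n k = 1 := by
  simp [switchRun, hk.not_gt, (Subtype.coe_ne_coe.1 hk.ne')]

theorem discSum_switchRun_pos {δ : ℝ} (h0 : 0 < δ) (h1 : δ < 1) (hn : n.1 < 0) :
    0 < discSum δ (switchRun r n) :=
  (summable_discSum h0.le h1 _).tsum_pos (fun _ => by positivity) ⟨0, le_rfl⟩
    (by simp [switchRun_of_gt (k := ⟨0, le_rfl⟩) hn])

theorem discSum_lt_discSum_switchRun {δ : ℝ} (h0 : 0 < δ) (h1 : δ < 1) {m : Stage}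
    (hm : r m = 0) (hn : n.1 = m.1 - 1) : discSum δ r < discSum δ (switchRun r n) := by
  have hweight : (-n.1).toNat = (-m.1).toNat + 1 := by have := m.2; omega
  have hval (a : Fin 2) : (a.val : ℝ) ≤ 1 := by exact_mod_cast Fin.is_le a
  have hs := summable_discSum h0.le h1
  have hmn : m ≠ n := fun h => by have := congrArg Subtype.val h; omega
  rw [← sub_pos, discSum, discSum, ← (hs _).tsum_sub (hs r)]
  refine tsum_pos_of_add_pos_of_nonneg ((hs _).sub (hs r)) hmn ?_ fun k _ hkn => ?_
  · have hgap : 0 < δ ^ (-m.1).toNat - δ ^ ((-m.1).toNat + 1) := by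
      rw [sub_pos]; exact pow_lt_pow_right_of_lt_one₀ h0 h1 (Nat.lt_succ_self _)
    have hloss := mul_le_of_le_one_right (pow_pos h0 ((-m.1).toNat + 1)).le (hval (r n))
    simp only [switchRun_of_gt (show n.1 < m.1 by omega), switchRun_self, hm, hweight,
      Fin.val_zero, Fin.val_one, Nat.cast_zero, Nat.cast_one, mul_zero, mul_one]
    linarith
  · rcases lt_or_gt_of_ne (Subtype.coe_ne_coe.2 hkn) with hk | hk
    · simp [switchRun_of_lt hk]
    · rw [switchRun_of_gt hk, Fin.val_one, Nat.cast_one, mul_one, sub_nonneg]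
      exact mul_le_of_le_one_right (by positivity) (hval _)

end switchRun

/-- the one-player reversed-time discounted game above admits no equilibrium:
for every run `r` there are a stage `n` and a run `r'` agreeing with `r` on all stages
`k < n` with strictly larger payoff. -/
theorem discounted_no_equilibrium (δ : ℝ) (h0 : 0 < δ) (h1 : δ < 1) (r : Run (Fin 2)) :
    ∃ (n : Stage) (r' : Run (Fin 2)),
      (∀ k : Stage, k.1 < n.1 → r' k = r k) ∧ discPayoff δ r < discPayoff δ r' := by
  by_cases hr : ∀ n : Stage, r n = 1
  · let n : Stage := ⟨-1, by norm_num⟩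
    refine ⟨n, switchRun r n, fun _ => switchRun_of_lt, ?_⟩
    rw [discPayoff_of_forall_eq_one hr, discPayoff_of_ne_one (m := n) (by simp [switchRun_self])]
    exact mul_pos (sub_pos.2 h1) (discSum_switchRun_pos h0 h1 (by norm_num))
  · obtain ⟨m, hm⟩ := not_forall.1 hr
    let n : Stage := ⟨m.1 - 1, by have := m.2; omega⟩
    refine ⟨n, switchRun r n, fun _ => switchRun_of_lt, ?_⟩
    rw [discPayoff_of_ne_one hm, discPayoff_of_ne_one (m := n) (by simp [switchRun_self])]
    exact mul_lt_mul_of_pos_left (discSum_lt_discSum_switchRun h0 h1 (by omega) rfl)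
      (sub_pos.2 h1)
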